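/- Let X be a finite connected quandle. Then the type t_X of X (the minimal positive N with x◁^N y = x for all x,y) divides |Inn(X)| / |X|. -/

import Mathlib

/-- A quandle in the convention of the paper. -/
class PQuandle (X : Type*) where
  op : X → X → X
  op_self : ∀ a : X, op a a = a
  op_bij : ∀ a : X, Function.Bijective (fun x => op x a)
  op_distrib : ∀ a b c : X, op (op a b) c = op (op a c) (op b c)

infixl:65 " ◁ " => PQuandle.op

namespace PQuandle

variable {X : Type*} [PQuandle X]

/-- The `n`-fold right operation `x ◁ⁿ y`. -/
def opn (x : X) (n : ℕ) (y : X) : X := (fun z => z ◁ y)^[n] x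

/-- The right translation `(· ◁ y)` as a permutation of `X`. -/
noncomputable def act (y : X) : Equiv.Perm X := Equiv.ofBijective _ (op_bij y)

@[simp] lemma act_apply (y x : X) : act y x = x ◁ y := rfl

/-- The inner automorphism group `Inn(X)`. -/
noncomputable def Inn (X : Type*) [PQuandle X] : Subgroup (Equiv.Perm X) :=
  Subgroup.closure (Set.range (act (X := X)))

/-- The relators `e_{x ◁ y}⁻¹ e_y⁻¹ e_x e_y` of the adjoint group. -/
def adjRels (X : Type*) [PQuandle X] : Set (FreeGroup X) :=
  { r | ∃ x y : X,
      r = (FreeGroup.of (x ◁ y))⁻¹ * (FreeGroup.of y)⁻¹ * FreeGroup.of x * FreeGroup.of y }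

/-- The adjoint (enveloping) group `As(X)` of the quandle `X`. -/
def Adj (X : Type*) [PQuandle X] : Type _ := PresentedGroup (adjRels X)

instance : Group (Adj X) := by unfold Adj; infer_instance

/-- The generator `e_x` of `As(X)`. -/
def gen (x : X) : Adj X := PresentedGroup.of x

lemma gen_rel (x y : X) : gen (x ◁ y) = (gen y)⁻¹ * gen x * gen y := by
  have h : ((FreeGroup.of (x ◁ y))⁻¹ * (FreeGroup.of y)⁻¹ * FreeGroup.of x * FreeGroup.of y :
      FreeGroup X) ∈ Subgroup.normalClosure (adjRels X) :=
    Subgroup.subset_normalClosure ⟨x, y, rfl⟩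
  have h2 : ((gen (x ◁ y))⁻¹ * (gen y)⁻¹ * gen x * gen y : Adj X) = 1 := by
    have := (QuotientGroup.eq_one_iff
      (((FreeGroup.of (x ◁ y))⁻¹ * (FreeGroup.of y)⁻¹ * FreeGroup.of x * FreeGroup.of y :
        FreeGroup X))).mpr h
    exact this
  calc gen (x ◁ y)
      = gen (x ◁ y) * ((gen (x ◁ y))⁻¹ * (gen y)⁻¹ * gen x * gen y) := by rw [h2, mul_one]
    _ = (gen y)⁻¹ * gen x * gen y := by group

lemma act_mul_act (x y : X) : act y * act x = act (x ◁ y) * act y := by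
  ext z
  simp only [Equiv.Perm.mul_apply, act_apply]
  exact op_distrib z x y

/-- The homomorphism `As(X) → Perm(X)` sending `e_y` to the inverse of the right
translation by `y`; it encodes the right action of `As(X)` on `X`. -/
noncomputable def innHom : Adj X →* Equiv.Perm X :=
  PresentedGroup.toGroup (f := fun y : X => (act y)⁻¹) (by
    rintro r ⟨x, y, rfl⟩
    simp only [map_mul, map_inv, FreeGroup.lift_apply_of, inv_inv]
    have := act_mul_act x y
    calc act (x ◁ y) * act y * (act x)⁻¹ * (act y)⁻¹
        = (act y * act x) * (act x)⁻¹ * (act y)⁻¹ := by rw [this]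
      _ = 1 := by group)

@[simp] lemma innHom_gen (y : X) : innHom (gen y) = (act y)⁻¹ :=
  PresentedGroup.toGroup.of _

/-- The right action of `As(X)` on `X`: `x · g`. -/
noncomputable def ract (x : X) (g : Adj X) : X := (innHom g)⁻¹ x

@[simp] lemma ract_gen (x y : X) : ract x (gen y) = x ◁ y := by
  simp [ract]

lemma ract_mul (x : X) (g h : Adj X) : ract x (g * h) = ract (ract x g) h := by
  simp [ract, map_mul]

/-- A quandle is connected if the right action of `As(X)` on `X` is transitive. -/
def Connected (X : Type*) [PQuandle X] : Prop :=
  ∀ x y : X, ∃ g : Adj X, ract x g = y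

/-- The homomorphism `ε : As(X) → ℤ` sending every generator `e_x` to `1`. -/
def eps : Adj X →* Multiplicative ℤ :=
  PresentedGroup.toGroup (f := fun _ : X => Multiplicative.ofAdd 1) (by
    rintro r ⟨x, y, rfl⟩
    simp only [map_mul, map_inv, FreeGroup.lift_apply_of]
    group)

@[simp] lemma eps_gen (x : X) : eps (gen x) = Multiplicative.ofAdd 1 :=
  PresentedGroup.toGroup.of _

/-- The underlying set of the universal covering quandle: `Ker ε`. -/
def covOp (a : X) (g h : (eps (X := X)).ker) : (eps (X := X)).ker :=
  ⟨(gen a)⁻¹ * g.1 * (h.1)⁻¹ * gen a * h.1, by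
    have hg : eps g.1 = 1 := g.2
    have hh : eps h.1 = 1 := h.2
    simp only [MonoidHom.mem_ker, map_mul, map_inv, hg, hh]
    group⟩

/-- `n`-fold covering operation. -/
def covOpn (a : X) (g : (eps (X := X)).ker) (n : ℕ) (h : (eps (X := X)).ker) :
    (eps (X := X)).ker := (fun u => covOp a u h)^[n] g

/-- The right translation of the covering quandle as a permutation. -/
def covAct (a : X) (h : (eps (X := X)).ker) : Equiv.Perm (eps (X := X)).ker where
  toFun g := covOp a g h
  invFun g := ⟨gen a * g.1 * (h.1)⁻¹ * (gen a)⁻¹ * h.1, by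
    have hg : eps g.1 = 1 := g.2
    have hh : eps h.1 = 1 := h.2
    simp only [MonoidHom.mem_ker, map_mul, map_inv, hg, hh]
    group⟩
  left_inv g := by
    apply Subtype.ext
    simp only [covOp]
    group
  right_inv g := by
    apply Subtype.ext
    simp only [covOp]
    group

end PQuandle

/-!
The translation `(· ◁ y)` lies in `Inn(X)` and fixes `y` because `y ◁ y = y`, so its order divides
the order of the stabilizer of `y`, which is `|Inn(X)| / |X|` by the orbit-stabilizer theorem for
the transitive action. Hence `x ◁^N y = x` for all `x, y` with `N = |Inn(X)| / |X|`, and the least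
positive common period `t` divides every common period.
-/

theorem dvd_of_isLeast_common_period {ι α : Type*} {f : ι → α → α} {t n : ℕ}
    (ht : IsLeast {N | 0 < N ∧ ∀ x i, Function.IsPeriodicPt (f i) N x} t)
    (hn : ∀ x i, Function.IsPeriodicPt (f i) n x) : t ∣ n := by
  refine Nat.dvd_of_mod_eq_zero (Nat.eq_zero_of_not_pos fun hpos => ?_)
  have hmod : t ≤ n % t := ht.2 ⟨hpos, fun x i => (hn x i).mod (ht.1.2 x i)⟩
  exact (Nat.mod_lt n ht.1.1).not_ge hmod

theorem MulAction.card_stabilizer_of_isPretransitive (G : Type*) {X : Type*} [Group G]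
    [MulAction G X] [MulAction.IsPretransitive G X] [Finite X] (x : X) :
    Nat.card (MulAction.stabilizer G x) = Nat.card G / Nat.card X := by
  have hX : 0 < Nat.card X := Nat.card_pos_iff.2 ⟨⟨x⟩, inferInstance⟩
  rw [← (MulAction.stabilizer G x).card_mul_index, MulAction.index_stabilizer_of_transitive,
    Nat.mul_div_cancel _ hX]

namespace PQuandle

variable {X : Type*} [PQuandle X]

lemma act_mem_inn (y : X) : act y ∈ Inn X :=
  Subgroup.subset_closure ⟨y, rfl⟩

lemma act_mem_stabilizer (y : X) :
    (⟨act y, act_mem_inn y⟩ : Inn X) ∈ MulAction.stabilizer (Inn X) y :=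
  op_self y

lemma opn_card_stabilizer (x y : X) :
    opn x (Nat.card (MulAction.stabilizer (Inn X) y)) y = x := by
  have hdvd := (MulAction.stabilizer (Inn X) y).orderOf_dvd_natCard (act_mem_stabilizer y)
  rw [Subgroup.orderOf_mk] at hdvd
  change (⇑(act y))^[Nat.card (MulAction.stabilizer (Inn X) y)] x = x
  rw [← Equiv.Perm.coe_pow, orderOf_dvd_iff_pow_eq_one.1 hdvd, Equiv.Perm.one_apply]

end PQuandle

open PQuandle in
theorem stmt3 (X : Type*) [PQuandle X] [Finite X]
    (hconn : ∀ x y : X, ∃ f ∈ Inn X, f x = y) (t : ℕ)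
    (ht : IsLeast {N : ℕ | 0 < N ∧ ∀ x y : X, opn x N y = x} t) :
    t ∣ Nat.card (Inn X) / Nat.card X := by
  have : MulAction.IsPretransitive (Inn X) X :=
    ⟨fun x y => let ⟨f, hf, hfx⟩ := hconn x y; ⟨⟨f, hf⟩, hfx⟩⟩
  refine dvd_of_isLeast_common_period (f := fun y x => x ◁ y) ht fun x y => ?_
  rw [← MulAction.card_stabilizer_of_isPretransitive (Inn X) y]
  exact opn_card_stabilizer x y
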